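/- (Comparison of error bounds.) Let R ≥ 2, s ≥ 1, k, λ > 0, μ > 0, ‖θ*_S‖_∞ ≥ 0, ξ_min(0) > 0, and set ξ_min(μ) = ξ_min(0) + μ. If √s·‖θ*_S‖_∞·ξ_min(0) ≤ √(R-1)·kλ, then (2√(R-1)·kλ + 2μ√s·‖θ*_S‖_∞)/ξ_min(μ) ≤ 2√(R-1)·kλ/ξ_min(0), i.e., the elastic-net error bound is no larger than the LASSO error bound. -/
import Mathlib

open Real

/-- Corollary 1 (comparison of error bounds): if √s·‖θ*_S‖_∞·ξ_min(0) ≤ √(R-1)·kλ,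
then the elastic-net bound (with ξ_min(μ) = ξ_min(0) + μ) is no larger than the
LASSO bound. -/
theorem stmt12 (R s : ℕ) (hR : 2 ≤ R) (hs : 1 ≤ s)
    (k lam μ cinf ξ0 : ℝ) (hk : 0 < k) (hlam : 0 < lam) (hμ : 0 < μ)
    (hcinf : 0 ≤ cinf) (hξ0 : 0 < ξ0)
    (h : Real.sqrt s * cinf * ξ0 ≤ Real.sqrt ((R : ℝ) - 1) * (k * lam)) :
    (2 * Real.sqrt ((R : ℝ) - 1) * (k * lam) + 2 * μ * Real.sqrt s * cinf) / (ξ0 + μ) ≤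
      2 * Real.sqrt ((R : ℝ) - 1) * (k * lam) / ξ0 := by
  rw [div_le_div_iff₀ (by linarith) hξ0]
  nlinarith [mul_le_mul_of_nonneg_left h hμ.le]
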